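/- Let T ≥ 1 be an integer, let τ_1,…,τ_T and τ̂_1,…,τ̂_T be real numbers, and let γ_T ≥ 0 satisfy (1/T)·∑_{j=1}^T (τ̂_j − τ_j)² ≤ γ_T². Let F : ℝ → ℝ be Lipschitz continuous with constant L > 0. Define the empirical distribution functions F̃(x) = (1/T)·∑_{j=1}^T 1(τ_j ≤ x) and F̂(x) = (1/T)·∑_{j=1}^T 1(τ̂_j ≤ x). Then sup_{x∈ℝ} |F̃(x) − F̂(x)| ≤ (L+1)·γ_T^{2/3} + 2·sup_{x∈ℝ} |F̃(x) − F(x)|. -/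

import Mathlib

/-!
If `|τ̂ⱼ - τⱼ| ≤ δ` then `τⱼ ≤ x - δ` forces `τ̂ⱼ ≤ x`, and conversely `τ̂ⱼ ≤ x` forces
`τⱼ ≤ x + δ`; by Markov's inequality the scores violating `|τ̂ⱼ - τⱼ| ≤ δ` make up at most a
fraction `γ² / δ²`. Hence `F̂(x)` is squeezed between `F̃(x - δ) - γ²/δ²` and `F̃(x + δ) + γ²/δ²`,
and `F̃` moves by at most `2 sup |F̃ - F| + L δ` over a distance `δ` because `F` is `L`-Lipschitz.
The choice `δ = γ^(2/3)` balances `L δ` against `γ² / δ²`; the case `γ = 0` follows by letting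
`δ → 0`.
-/

open Finset Filter Topology

theorem sub_le_of_abs_sub_le_of_lipschitz {G F : ℝ → ℝ} {S L : ℝ}
    (hGF : ∀ x, |G x - F x| ≤ S) (hLip : ∀ x y, |F x - F y| ≤ L * |x - y|) (a b : ℝ) :
    G a - G b ≤ 2 * S + L * |a - b| := by
  have ha := (abs_le.mp (hGF a)).2
  have hb := (abs_le.mp (hGF b)).1
  have hF := (le_abs_self _).trans (hLip a b)
  linarith

noncomputable section

variable {ι : Type*} [Fintype ι]

def empiricalCDF (τ : ι → ℝ) (x : ℝ) : ℝ :=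
  (∑ j, if τ j ≤ x then (1 : ℝ) else 0) / Fintype.card ι

def meanSqDist (a b : ι → ℝ) : ℝ :=
  (∑ j, (a j - b j) ^ 2) / Fintype.card ι

theorem meanSqDist_comm (a b : ι → ℝ) : meanSqDist a b = meanSqDist b a := by
  simp only [meanSqDist, sub_sq_comm]

theorem ite_le_ite_add_sq_div_sq {a b y δ : ℝ} (hδ : 0 < δ) :
    (if a ≤ y then (1 : ℝ) else 0) ≤ (if b ≤ y + δ then 1 else 0) + (a - b) ^ 2 / δ ^ 2 := by
  have hsq : 0 ≤ (a - b) ^ 2 / δ ^ 2 := by positivity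
  split_ifs with ha hb
  · linarith
  · have hgap : δ ^ 2 ≤ (a - b) ^ 2 := by nlinarith
    have : 1 ≤ (a - b) ^ 2 / δ ^ 2 := (one_le_div (by positivity)).mpr hgap
    linarith
  · linarith
  · linarith

theorem empiricalCDF_le_add_meanSqDist_div {a b : ι → ℝ} {δ : ℝ} (hδ : 0 < δ) (y : ℝ) :
    empiricalCDF a y ≤ empiricalCDF b (y + δ) + meanSqDist a b / δ ^ 2 := by
  have hsum : empiricalCDF b (y + δ) + meanSqDist a b / δ ^ 2
      = (∑ j, ((if b j ≤ y + δ then (1 : ℝ) else 0) + (a j - b j) ^ 2 / δ ^ 2))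
          / Fintype.card ι := by
    rw [sum_add_distrib, ← sum_div, empiricalCDF, meanSqDist]
    ring
  rw [hsum, empiricalCDF]
  gcongr with j
  exact ite_le_ite_add_sq_div_sq hδ

theorem abs_empiricalCDF_sub_le {τ τhat : ι → ℝ} {F : ℝ → ℝ}
    {S L δ : ℝ} (hGF : ∀ x, |empiricalCDF τ x - F x| ≤ S)
    (hLip : ∀ x y, |F x - F y| ≤ L * |x - y|) (hδ : 0 < δ) (hm : meanSqDist τhat τ ≤ δ ^ 3)
    (x : ℝ) :
    |empiricalCDF τ x - empiricalCDF τhat x| ≤ (L + 1) * δ + 2 * S := by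
  have hmδ : meanSqDist τhat τ / δ ^ 2 ≤ δ := by
    rw [div_le_iff₀ (by positivity)]
    linarith [pow_succ δ 2]
  have hdist : |x + δ - x| = δ ∧ |x - (x - δ)| = δ := by
    constructor <;> simp [abs_of_pos hδ]
  have hup := empiricalCDF_le_add_meanSqDist_div (a := τhat) (b := τ) hδ x
  have hdown := empiricalCDF_le_add_meanSqDist_div (a := τ) (b := τhat) hδ (x - δ)
  rw [sub_add_cancel, meanSqDist_comm] at hdown
  have hright := sub_le_of_abs_sub_le_of_lipschitz hGF hLip (x + δ) x
  have hleft := sub_le_of_abs_sub_le_of_lipschitz hGF hLip x (x - δ)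
  rw [hdist.1] at hright
  rw [hdist.2] at hleft
  rw [abs_le]
  constructor <;> linarith

end

theorem stmt_0_general (T : ℕ) (τ τhat : Fin T → ℝ) (γ : ℝ) (hγ : 0 ≤ γ)
    (hEst : (∑ j, (τhat j - τ j) ^ 2) / T ≤ γ ^ 2)
    (F : ℝ → ℝ) (L : ℝ)
    (hLip : ∀ x y, |F x - F y| ≤ L * |x - y|)
    (hbdd : BddAbove (Set.range fun x : ℝ =>
      |(∑ j, if τ j ≤ x then (1 : ℝ) else 0) / T - F x|)) :
    (⨆ x : ℝ, |(∑ j, if τ j ≤ x then (1 : ℝ) else 0) / T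
        - (∑ j, if τhat j ≤ x then (1 : ℝ) else 0) / T|)
      ≤ (L + 1) * γ ^ ((2 : ℝ) / 3)
        + 2 * ⨆ x : ℝ, |(∑ j, if τ j ≤ x then (1 : ℝ) else 0) / T - F x| := by
  have hcdf (a : Fin T → ℝ) (x : ℝ) :
      (∑ j, if a j ≤ x then (1 : ℝ) else 0) / T = empiricalCDF a x := by
    simp [empiricalCDF]
  have hm : meanSqDist τhat τ ≤ γ ^ 2 := by simpa [meanSqDist] using hEst
  simp only [hcdf] at hbdd ⊢
  set S := ⨆ x : ℝ, |empiricalCDF τ x - F x|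
  have hGF (x : ℝ) : |empiricalCDF τ x - F x| ≤ S := le_ciSup hbdd x
  refine ciSup_le fun x => ?_
  rcases hγ.eq_or_lt with rfl | hγpos
  · have hlim : Tendsto (fun δ => (L + 1) * δ + 2 * S) (𝓝[>] 0) (𝓝 ((L + 1) * 0 + 2 * S)) :=
      (by fun_prop : Continuous fun δ : ℝ => (L + 1) * δ + 2 * S).continuousWithinAt
    rw [Real.zero_rpow (by norm_num)]
    refine ge_of_tendsto hlim (eventually_nhdsWithin_of_forall fun δ (hδ : 0 < δ) => ?_)
    exact abs_empiricalCDF_sub_le hGF hLip hδ (by linarith [pow_pos hδ 3]) x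
  · have hcube : (γ ^ ((2 : ℝ) / 3)) ^ 3 = γ ^ 2 := by
      rw [← Real.rpow_natCast, ← Real.rpow_mul hγ]
      norm_num
    exact abs_empiricalCDF_sub_le hGF hLip (by positivity) (hcube ▸ hm) x

/-- Lemma 1 (empirical-CDF comparison): if the estimated non-conformity scores `τhat`
are close to the oracle scores `τ` in mean square (Assumption 1), and the common CDF `F`
is `L`-Lipschitz (Assumption 2), then the sup-distance between the empirical CDF of the
oracle scores and that of the estimated scores is bounded by
`(L+1) γ^(2/3) + 2 sup_x |F̃(x) - F(x)|`. -/
theorem stmt_0 (T : ℕ) (hT : 1 ≤ T) (τ τhat : Fin T → ℝ) (γ : ℝ) (hγ : 0 ≤ γ)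
    (hEst : (∑ j, (τhat j - τ j) ^ 2) / T ≤ γ ^ 2)
    (F : ℝ → ℝ) (L : ℝ) (hL : 0 < L)
    (hLip : ∀ x y, |F x - F y| ≤ L * |x - y|)
    (hbdd : BddAbove (Set.range fun x : ℝ =>
      |(∑ j, if τ j ≤ x then (1 : ℝ) else 0) / T - F x|)) :
    (⨆ x : ℝ, |(∑ j, if τ j ≤ x then (1 : ℝ) else 0) / T
        - (∑ j, if τhat j ≤ x then (1 : ℝ) else 0) / T|)
      ≤ (L + 1) * γ ^ ((2 : ℝ) / 3)
        + 2 * ⨆ x : ℝ, |(∑ j, if τ j ≤ x then (1 : ℝ) else 0) / T - F x| :=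
  stmt_0_general T τ τhat γ hγ hEst F L hLip hbdd
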